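/- arXiv:2302.05806 — 2 statements merged into one kernel-verified Lean document; each statement's English description precedes it below -/
import Mathlib

section
/- A random joint choice rule p on two periods satisfying complete monotonicity and marginality has a consumption dependent random utility representation: there exist ν ∈ Δ(L(X)) and t : X × L(X) → Δ(L(X)) such that p(x,y,A,B) = ∑_{≻∈N(x,A)}∑_{≻'∈N(y,B)} ν(≻)t_{≻'}(x,≻) for all A,B and (x,y) ∈ A×B. -/
open Finset

variable {α : Type*} [Fintype α] [DecidableEq α]

/-- A preference (linear order) on `α`, encoded as a ranking: `r x < r y` means `x` is
strictly preferred to `y`. -/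
abbrev Pref (α : Type*) [Fintype α] := α ≃ Fin (Fintype.card α)

/-- `NSet x A`: preferences whose maximal element of `A` is `x`. -/
def NSet (x : α) (A : Finset α) : Finset (Pref α) :=
  Finset.univ.filter (fun r => ∀ y ∈ A, y ≠ x → r x < r y)

/-- supersets of A -/
private def SS (A : Finset α) : Finset (Finset α) :=
  Finset.univ.powerset.filter (fun A' => A ⊆ A')

private lemma mem_SS {A B : Finset α} : B ∈ SS A ↔ A ⊆ B := by
  simp [SS]

private lemma self_mem_SS {A : Finset α} : A ∈ SS A := mem_SS.2 (subset_refl A)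

private lemma univ_mem_SS {A : Finset α} : (univ : Finset α) ∈ SS A := mem_SS.2 (subset_univ A)

private lemma SS_univ : SS (univ : Finset α) = {univ} := by
  ext B
  simp only [mem_SS, mem_singleton]
  constructor
  · intro h; exact (Finset.univ_subset_iff).1 h
  · intro h; subst h; exact subset_refl _

private lemma filter_SS (A : Finset α) (x : α) (hx : x ∉ A) :
    (SS A).filter (fun A' => x ∈ A') = SS (insert x A) := by
  ext B; simp [mem_SS, Finset.insert_subset_iff]; tauto

/-- Möbius uniqueness downward induction -/
private lemma mob (F G : Finset α → ℝ)
    (h : ∀ A : Finset α, A.Nonempty → ∑ A' ∈ SS A, F A' = ∑ A' ∈ SS A, G A') :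
    ∀ A : Finset α, A.Nonempty → F A = G A := by
  suffices H : ∀ m : ℕ, ∀ A : Finset α, A.Nonempty → (univ : Finset α).card - A.card ≤ m → F A = G A by
    intro A hA; exact H ((univ : Finset α).card - A.card) A hA le_rfl
  intro m
  induction m with
  | zero =>
    intro A hA h0
    have hle := card_le_univ A
    have hcu : (univ : Finset α).card = Fintype.card α := Finset.card_univ
    have : A = univ := Finset.eq_univ_of_card A (by omega)
    subst this
    have := h univ ⟨_, hA.choose_spec⟩
    rwa [SS_univ, sum_singleton, sum_singleton] at this
  | succ m ih =>
    intro A hA hm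
    have hsum := h A hA
    rw [← Finset.sum_erase_add _ _ (self_mem_SS (A := A)),
        ← Finset.sum_erase_add _ _ (self_mem_SS (A := A))] at hsum
    have herase : ∑ A' ∈ (SS A).erase A, F A' = ∑ A' ∈ (SS A).erase A, G A' := by
      apply Finset.sum_congr rfl
      intro A' hA'
      rw [mem_erase, mem_SS] at hA'
      have hss : A ⊂ A' := Finset.ssubset_iff_subset_ne.2 ⟨hA'.2, (Ne.symm hA'.1)⟩
      exact ih A' (hA.mono hA'.2) (by
        have := Finset.card_lt_card hss
        omega)
    linarith

private lemma filter_SS_mem (B : Finset α) (y : α) (hy : y ∈ B) :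
    (SS B).filter (fun A' => y ∈ A') = SS B :=
  Finset.filter_true_of_mem (fun A' hA' => (mem_SS.1 hA') hy)

private lemma sum_SS_inner (G : α → Finset α → ℝ) (B : Finset α) :
    ∑ B' ∈ SS B, ∑ y ∈ B', G y B'
      = (∑ y ∈ B, ∑ B' ∈ SS B, G y B') + ∑ y ∈ Bᶜ, ∑ B' ∈ SS (insert y B), G y B' := by
  have key : ∀ y : α, ∑ B' ∈ (SS B).filter (fun A' => y ∈ A'), G y B'
      = if y ∈ B then ∑ B' ∈ SS B, G y B' else ∑ B' ∈ SS (insert y B), G y B' := by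
    intro y
    by_cases hy : y ∈ B
    · rw [if_pos hy, filter_SS_mem B y hy]
    · rw [if_neg hy, filter_SS B y hy]
  calc ∑ B' ∈ SS B, ∑ y ∈ B', G y B'
      = ∑ B' ∈ SS B, ∑ y : α, if y ∈ B' then G y B' else 0 := by
        apply sum_congr rfl; intro B' _
        rw [Finset.sum_ite_mem, univ_inter]
    _ = ∑ y : α, ∑ B' ∈ (SS B).filter (fun A' => y ∈ A'), G y B' := by
        rw [Finset.sum_comm]
        apply sum_congr rfl; intro y _
        rw [Finset.sum_filter]
    _ = ∑ y : α, (if y ∈ B then ∑ B' ∈ SS B, G y B' else ∑ B' ∈ SS (insert y B), G y B') := by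
        apply sum_congr rfl; intro y _; exact key y
    _ = _ := by
        rw [← Finset.sum_add_sum_compl B]
        congr 1
        · apply sum_congr rfl; intro y hy; rw [if_pos hy]
        · apply sum_congr rfl; intro y hy; rw [if_neg (Finset.mem_compl.1 hy)]

private lemma sum_SS_insert (G : α → Finset α → ℝ) (B : Finset α) :
    ∑ B' ∈ SS B, ∑ z ∈ B'ᶜ, G z (insert z B')
      = ∑ z ∈ Bᶜ, ∑ B'' ∈ SS (insert z B), G z B'' := by
  calc ∑ B' ∈ SS B, ∑ z ∈ B'ᶜ, G z (insert z B')
      = ∑ B' ∈ SS B, ∑ z : α, if z ∈ B'ᶜ then G z (insert z B') else 0 := by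
        apply sum_congr rfl; intro B' _
        rw [Finset.sum_ite_mem, univ_inter]
    _ = ∑ z : α, ∑ B' ∈ (SS B).filter (fun A' => z ∈ A'ᶜ), G z (insert z B') := by
        rw [Finset.sum_comm]
        apply sum_congr rfl; intro z _
        rw [Finset.sum_filter]
    _ = ∑ z : α, if z ∈ Bᶜ then (∑ B'' ∈ SS (insert z B), G z B'') else 0 := by
        apply sum_congr rfl; intro z _
        by_cases hz : z ∈ B
        · rw [if_neg (by simpa using hz)]
          apply Finset.sum_eq_zero
          intro B' hB'
          rw [mem_filter, mem_SS] at hB'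
          exact absurd (hB'.1 hz) (by simpa using hB'.2)
        · rw [if_pos (by simpa using hz)]
          apply Finset.sum_nbij' (i := fun B' => insert z B') (j := fun B'' => B''.erase z)
          · intro B' hB'
            rw [mem_filter, mem_SS] at hB'
            exact mem_SS.2 (Finset.insert_subset_insert _ hB'.1)
          · intro B'' hB''
            rw [mem_SS] at hB''
            rw [mem_filter, mem_SS]
            constructor
            · intro a ha
              rw [Finset.mem_erase]
              refine ⟨fun h => hz (h ▸ ha), hB'' (Finset.mem_insert_of_mem ha)⟩
            · simp
          · intro B' hB'
            rw [mem_filter, Finset.mem_compl] at hB'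
            exact Finset.erase_insert hB'.2
          · intro B'' hB''
            rw [mem_SS] at hB''
            exact Finset.insert_erase (hB'' (Finset.mem_insert_self _ _))
          · intro B' _; rfl
    _ = _ := by
        rw [← Finset.sum_add_sum_compl B]
        have h1 : ∑ z ∈ B, (if z ∈ Bᶜ then (∑ B'' ∈ SS (insert z B), G z B'') else 0) = 0 := by
          apply Finset.sum_eq_zero; intro z hz
          rw [if_neg (by simpa using hz)]
        have h2 : ∑ z ∈ Bᶜ, (if z ∈ Bᶜ then (∑ B'' ∈ SS (insert z B), G z B'') else 0)
            = ∑ z ∈ Bᶜ, ∑ B'' ∈ SS (insert z B), G z B'' := by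
          apply sum_congr rfl; intro z hz; rw [if_pos hz]
        rw [h1, h2, zero_add]

/-- conservation of Möbius weights -/
private lemma cons (G : α → Finset α → ℝ) (c : ℝ) (hne : (univ : Finset α).Nonempty)
    (h : ∀ B : Finset α, B.Nonempty → ∑ y ∈ B, ∑ B' ∈ SS B, G y B' = c) :
    (∑ y, G y univ = c) ∧ ∀ B : Finset α, B.Nonempty → B ≠ univ →
      ∑ y ∈ B, G y B = ∑ z ∈ Bᶜ, G z (insert z B) := by
  set F : Finset α → ℝ := fun B => (∑ y ∈ B, G y B) - ∑ z ∈ Bᶜ, G z (insert z B) with hF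
  set E : Finset α → ℝ := fun B => if B = univ then c else 0 with hE
  have hFE : ∀ B : Finset α, B.Nonempty → F B = E B := by
    apply mob
    intro B hB
    have hFsum : ∑ B' ∈ SS B, F B' = c := by
      rw [hF]
      rw [Finset.sum_sub_distrib, sum_SS_inner, sum_SS_insert, h B hB]
      ring
    have hEsum : ∑ B' ∈ SS B, E B' = c := by
      rw [hE]
      rw [Finset.sum_ite_eq' (SS B) univ (fun _ => c), if_pos univ_mem_SS]
    rw [hFsum, hEsum]
  constructor
  · have := hFE univ hne
    rw [hF, hE] at this
    simp only [if_pos rfl, Finset.compl_univ, Finset.sum_empty, sub_zero] at this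
    exact this
  · intro B hB hBu
    have := hFE B hB
    rw [hF, hE] at this
    simp only [if_neg hBu] at this
    linarith

private def Lo (r : Pref α) (j : ℕ) : Finset α := univ.filter (fun z => j ≤ (r z : ℕ))

private lemma mem_Lo {r : Pref α} {j : ℕ} {z : α} : z ∈ Lo r j ↔ j ≤ (r z : ℕ) := by
  simp [Lo]

private lemma Lo_zero (r : Pref α) : Lo r 0 = univ := by
  ext z; simp [mem_Lo]

private lemma symm_mem_Lo (r : Pref α) (i : Fin (Fintype.card α)) : r.symm i ∈ Lo r (i : ℕ) := by
  rw [mem_Lo, Equiv.apply_symm_apply]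

private lemma card_Lo (r : Pref α) (j : ℕ) :
    (Lo r j).card = Fintype.card α - j := by
  classical
  rw [show Lo r j = (univ.filter (fun i : Fin (Fintype.card α) => j ≤ (i : ℕ))).image r.symm by
    ext z
    simp only [mem_Lo, Finset.mem_image, mem_filter, mem_univ, true_and]
    constructor
    · intro h; exact ⟨r z, h, Equiv.symm_apply_apply r z⟩
    · rintro ⟨i, hi, rfl⟩; rwa [Equiv.apply_symm_apply]]
  rw [Finset.card_image_of_injective _ r.symm.injective]
  rw [show (univ.filter (fun i : Fin (Fintype.card α) => j ≤ (i : ℕ))) =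
      (Finset.Ico j (Fintype.card α)).attachFin (fun m hm => (Finset.mem_Ico.1 hm).2) by
    ext i
    simp [Finset.mem_attachFin, Finset.mem_Ico, i.isLt]]
  rw [Finset.card_attachFin, Nat.card_Ico]

private lemma Lo_det {r s : Pref α} {j : ℕ}
    (h : ∀ i : Fin (Fintype.card α), (i : ℕ) < j → r.symm i = s.symm i)
    {k : ℕ} (hk : k ≤ j) : Lo r k = Lo s k := by
  have key : ∀ (r s : Pref α),
      (∀ i : Fin (Fintype.card α), (i : ℕ) < j → r.symm i = s.symm i) →
      ∀ z : α, (s z : ℕ) < k → (r z : ℕ) < k := by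
    intro r s h z hz
    have h1 : r.symm (s z) = s.symm (s z) := h (s z) (lt_of_lt_of_le hz hk)
    rw [Equiv.symm_apply_apply] at h1
    have : r z = s z := by
      conv_lhs => rw [← h1]
      rw [Equiv.apply_symm_apply]
    rwa [this]
  ext z
  simp only [mem_Lo]
  constructor
  · intro hz
    by_contra hz'
    exact absurd (key r s h z (by omega)) (by omega)
  · intro hz
    by_contra hz'
    exact absurd (key s r (fun i hi => (h i hi).symm) z (by omega)) (by omega)

private lemma Lo_succ (r : Pref α) (j : ℕ) (hj : j < Fintype.card α) :
    Lo r (j + 1) = (Lo r j).erase (r.symm ⟨j, hj⟩) := by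
  ext z
  simp only [mem_Lo, Finset.mem_erase]
  constructor
  · intro h
    refine ⟨fun hzz => ?_, by omega⟩
    rw [Equiv.eq_symm_apply] at hzz
    rw [hzz] at h
    simp at h
  · rintro ⟨hne, hle⟩
    rcases Nat.lt_or_ge j (r z : ℕ) with h | h
    · omega
    · exfalso
      apply hne
      rw [Equiv.eq_symm_apply]
      have : (r z : ℕ) = j := by omega
      exact Fin.ext this

private def Agr (j : ℕ) (r₀ : Pref α) : Finset (Pref α) :=
  univ.filter (fun r => ∀ i : Fin (Fintype.card α), (i : ℕ) < j → r.symm i = r₀.symm i)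

private lemma mem_Agr {j : ℕ} {r₀ r : Pref α} :
    r ∈ Agr j r₀ ↔ ∀ i : Fin (Fintype.card α), (i : ℕ) < j → r.symm i = r₀.symm i := by
  simp [Agr]

private def ExtP (r₀ : Pref α) (j : Fin (Fintype.card α)) (z : α) : Pref α :=
  (Equiv.swap (r₀.symm j) z).trans r₀

private lemma ExtP_symm_eq (r₀ : Pref α) (j : Fin (Fintype.card α)) (z : α)
    (i : Fin (Fintype.card α)) :
    (ExtP r₀ j z).symm i = Equiv.swap (r₀.symm j) z (r₀.symm i) := by
  simp [ExtP, Equiv.symm_trans_apply, Equiv.symm_symm]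

private lemma ExtP_symm_self (r₀ : Pref α) (j : Fin (Fintype.card α)) (z : α) :
    (ExtP r₀ j z).symm j = z := by
  rw [ExtP_symm_eq, Equiv.swap_apply_left]

private lemma ExtP_symm_lt (r₀ : Pref α) (j : Fin (Fintype.card α)) (z : α)
    (hz : z ∈ Lo r₀ (j : ℕ)) (i : Fin (Fintype.card α)) (hi : (i : ℕ) < (j : ℕ)) :
    (ExtP r₀ j z).symm i = r₀.symm i := by
  rw [ExtP_symm_eq]
  apply Equiv.swap_apply_of_ne_of_ne
  · intro h
    have := r₀.symm.injective h
    rw [this] at hi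
    omega
  · intro h
    rw [Equiv.symm_apply_eq] at h
    rw [mem_Lo, ← h] at hz
    simp at hz
    omega

private lemma sumAgr_split {M : Type*} [AddCommMonoid M] (f : Pref α → M)
    (j : Fin (Fintype.card α)) (r₀ : Pref α) :
    ∑ r ∈ Agr (j : ℕ) r₀, f r = ∑ z ∈ Lo r₀ (j : ℕ), ∑ r ∈ Agr ((j : ℕ) + 1) (ExtP r₀ j z), f r := by
  rw [← Finset.sum_fiberwise_of_maps_to (g := fun r : Pref α => r.symm j)
    (t := Lo r₀ (j : ℕ)) ?_ f]
  · apply sum_congr rfl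
    intro z hz
    congr 1
    ext r
    rw [mem_filter, mem_Agr, mem_Agr]
    constructor
    · rintro ⟨hagr, hzr⟩ i hi
      rcases Nat.lt_or_ge (i : ℕ) (j : ℕ) with h | h
      · rw [hagr i h, ExtP_symm_lt r₀ j z hz i h]
      · have : i = j := Fin.ext (by omega)
        rw [this, hzr, ExtP_symm_self]
    · intro hagr
      constructor
      · intro i hi
        rw [hagr i (by omega), ExtP_symm_lt r₀ j z hz i hi]
      · rw [hagr j (by omega), ExtP_symm_self]
  · intro r hr
    rw [mem_Agr] at hr
    rw [← Lo_det hr (le_refl (j : ℕ))]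
    exact symm_mem_Lo r j

private def pastP (P : Finset α → α → ℝ) (j : ℕ) (r : Pref α) : ℝ :=
  ∏ i ∈ univ.filter (fun i : Fin (Fintype.card α) => (i : ℕ) < j), P (Lo r (i : ℕ)) (r.symm i)

private def futP (P : Finset α → α → ℝ) (j : ℕ) (r : Pref α) : ℝ :=
  ∏ i ∈ univ.filter (fun i : Fin (Fintype.card α) => j ≤ (i : ℕ)), P (Lo r (i : ℕ)) (r.symm i)

private def muP (P : Finset α → α → ℝ) (r : Pref α) : ℝ :=
  ∏ i : Fin (Fintype.card α), P (Lo r (i : ℕ)) (r.symm i)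

private lemma muP_split (P : Finset α → α → ℝ) (j : ℕ) (r : Pref α) :
    muP P r = pastP P j r * futP P j r := by
  rw [muP, pastP, futP, ← Finset.prod_filter_mul_prod_filter_not univ
    (fun i : Fin (Fintype.card α) => (i : ℕ) < j)]
  congr 1
  apply Finset.prod_congr _ (fun _ _ => rfl)
  ext i
  simp [Nat.not_lt]

private lemma pastP_congr (P : Finset α → α → ℝ) {j : ℕ} {r r₀ : Pref α}
    (h : ∀ i : Fin (Fintype.card α), (i : ℕ) < j → r.symm i = r₀.symm i) :
    pastP P j r = pastP P j r₀ := by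
  apply Finset.prod_congr rfl
  intro i hi
  rw [mem_filter] at hi
  rw [h i hi.2, Lo_det h (le_of_lt hi.2)]

private lemma Agr_card_eq (r₀ : Pref α) : Agr (Fintype.card α) r₀ = {r₀} := by
  ext r
  rw [mem_Agr, mem_singleton]
  constructor
  · intro h
    have hsymm : r.symm = r₀.symm := Equiv.ext (fun i => h i i.isLt)
    rw [← Equiv.symm_symm r, hsymm, Equiv.symm_symm]
  · rintro rfl; intro i _; rfl

private lemma futSum (P : Finset α → α → ℝ)
    (hP1 : ∀ B : Finset α, B.Nonempty → ∑ y ∈ B, P B y = 1) :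
    ∀ d j : ℕ, j + d = Fintype.card α → ∀ r₀ : Pref α,
      ∑ r ∈ Agr j r₀, futP P j r = 1 := by
  intro d
  induction d with
  | zero =>
    intro j hj r₀
    have hj' : j = Fintype.card α := by omega
    subst hj'
    rw [Agr_card_eq, sum_singleton, futP]
    rw [Finset.filter_false_of_mem (fun i _ => by omega), Finset.prod_empty]
  | succ d ih =>
    intro j hj r₀
    have hjn : j < Fintype.card α := by omega
    have hsplit := sumAgr_split (f := futP P j) ⟨j, hjn⟩ r₀
    simp only at hsplit
    rw [hsplit]
    have hLo : ∀ z ∈ Lo r₀ j, ∑ r ∈ Agr (j + 1) (ExtP r₀ ⟨j, hjn⟩ z), futP P j r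
        = P (Lo r₀ j) z := by
      intro z hz
      have hfilter : (univ.filter (fun i : Fin (Fintype.card α) => j ≤ (i : ℕ)))
          = insert ⟨j, hjn⟩ (univ.filter (fun i : Fin (Fintype.card α) => j + 1 ≤ (i : ℕ))) := by
        ext i
        simp only [mem_filter, mem_univ, true_and, Finset.mem_insert]
        constructor
        · intro h
          rcases Nat.eq_or_lt_of_le h with h' | h'
          · left; exact Fin.ext h'.symm
          · right; omega
        · rintro (rfl | h)
          · simp
          · omega
      have hins : (⟨j, hjn⟩ : Fin (Fintype.card α)) ∉
          univ.filter (fun i : Fin (Fintype.card α) => j + 1 ≤ (i : ℕ)) := by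
        simp
      have hterm : ∀ r ∈ Agr (j + 1) (ExtP r₀ ⟨j, hjn⟩ z),
          futP P j r = P (Lo r₀ j) z * futP P (j + 1) r := by
        intro r hr
        rw [mem_Agr] at hr
        have h1 : Lo r j = Lo r₀ j := by
          rw [Lo_det hr (by omega)]
          exact Lo_det (fun i hi => ExtP_symm_lt r₀ ⟨j, hjn⟩ z hz i hi) (le_refl j)
        have h2 : r.symm ⟨j, hjn⟩ = z := by
          rw [hr ⟨j, hjn⟩ (by simp), ExtP_symm_self]
        rw [futP, hfilter, Finset.prod_insert hins, h1, h2]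
        rfl
      rw [Finset.sum_congr rfl hterm, ← Finset.mul_sum, ih (j + 1) (by omega), mul_one]
    rw [Finset.sum_congr rfl hLo]
    apply hP1
    rw [← Finset.card_pos, card_Lo]
    omega

private lemma muSum (P : Finset α → α → ℝ)
    (hP1 : ∀ B : Finset α, B.Nonempty → ∑ y ∈ B, P B y = 1)
    (j : ℕ) (hj : j ≤ Fintype.card α) (r₀ : Pref α) :
    ∑ r ∈ Agr j r₀, muP P r = pastP P j r₀ := by
  calc ∑ r ∈ Agr j r₀, muP P r = ∑ r ∈ Agr j r₀, pastP P j r₀ * futP P j r := by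
        apply Finset.sum_congr rfl
        intro r hr
        rw [mem_Agr] at hr
        rw [muP_split P j r, pastP_congr P hr]
    _ = pastP P j r₀ * ∑ r ∈ Agr j r₀, futP P j r := by rw [Finset.mul_sum]
    _ = pastP P j r₀ := by
        rw [futSum P hP1 (Fintype.card α - j) j (by omega) r₀, mul_one]

private lemma cardAgr : ∀ d j : ℕ, j + d = Fintype.card α → ∀ r₀ : Pref α,
    (Agr j r₀).card = Nat.factorial d := by
  intro d
  induction d with
  | zero =>
    intro j hj r₀
    have hj' : j = Fintype.card α := by omega
    subst hj'
    rw [Agr_card_eq, Finset.card_singleton, Nat.factorial_zero]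
  | succ d ih =>
    intro j hj r₀
    have hjn : j < Fintype.card α := by omega
    rw [Finset.card_eq_sum_ones]
    have hsplit := sumAgr_split (f := fun _ => (1 : ℕ)) ⟨j, hjn⟩ r₀
    simp only at hsplit
    rw [hsplit]
    have : ∀ z ∈ Lo r₀ j, ∑ _r ∈ Agr (j + 1) (ExtP r₀ ⟨j, hjn⟩ z), (1 : ℕ) = Nat.factorial d := by
      intro z _
      rw [← Finset.card_eq_sum_ones, ih (j + 1) (by omega)]
    rw [Finset.sum_congr rfl this, Finset.sum_const, card_Lo, Nat.factorial_succ]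
    have : Fintype.card α - j = d + 1 := by omega
    rw [this, smul_eq_mul]

private def phiF (j : ℕ) (r : Pref α) : Fin (Fintype.card α) → Option α :=
  fun i => if (i : ℕ) < j then some (r.symm i) else none

private lemma phiF_eq_iff {j : ℕ} {r r₀ : Pref α} :
    phiF j r = phiF j r₀ ↔ ∀ i : Fin (Fintype.card α), (i : ℕ) < j → r.symm i = r₀.symm i := by
  constructor
  · intro h i hi
    have := congrFun h i
    rw [phiF, phiF] at this
    simp only [if_pos hi] at this
    exact Option.some.inj this
  · intro h
    funext i
    rw [phiF, phiF]
    by_cases hi : (i : ℕ) < j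
    · rw [if_pos hi, if_pos hi, h i hi]
    · rw [if_neg hi, if_neg hi]

private lemma fiber_lemma (P : Finset α → α → ℝ)
    (hP1 : ∀ B : Finset α, B.Nonempty → ∑ y ∈ B, P B y = 1)
    (j d : ℕ) (hjd : j + d = Fintype.card α) (S : Finset (Pref α))
    (hcl : ∀ r₀ ∈ S, Agr j r₀ ⊆ S) :
    ∑ r ∈ S, muP P r * (Nat.factorial d : ℝ) = ∑ r ∈ S, pastP P j r := by
  have hfib : ∀ r₀ ∈ S, S.filter (fun r => phiF j r = phiF j r₀) = Agr j r₀ := by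
    intro r₀ hr₀
    ext r
    rw [mem_filter, mem_Agr]
    constructor
    · rintro ⟨_, h⟩
      exact phiF_eq_iff.1 h
    · intro h
      exact ⟨hcl r₀ hr₀ (mem_Agr.2 h), phiF_eq_iff.2 h⟩
  have hmaps : ∀ r ∈ S, phiF j r ∈ S.image (phiF j) := fun r hr => mem_image_of_mem _ hr
  rw [← Finset.sum_fiberwise_of_maps_to hmaps (fun r => muP P r * (Nat.factorial d : ℝ)),
      ← Finset.sum_fiberwise_of_maps_to hmaps (fun r => pastP P j r)]
  apply Finset.sum_congr rfl
  intro v hv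
  obtain ⟨r₀, hr₀S, rfl⟩ := Finset.mem_image.1 hv
  rw [hfib r₀ hr₀S, ← Finset.sum_mul, muSum P hP1 j (by omega) r₀]
  have : ∀ r ∈ Agr j r₀, pastP P j r = pastP P j r₀ := by
    intro r hr
    exact pastP_congr P (mem_Agr.1 hr)
  rw [Finset.sum_congr rfl this, Finset.sum_const, cardAgr d j hjd r₀, nsmul_eq_mul, mul_comm]

private def Tset (j : ℕ) (hj : j < Fintype.card α) (B : Finset α) (z : α) : Finset (Pref α) :=
  univ.filter (fun r => Lo r j = B ∧ r.symm ⟨j, hj⟩ = z)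

private lemma mem_Tset {j : ℕ} {hj : j < Fintype.card α} {B : Finset α} {z : α} {r : Pref α} :
    r ∈ Tset j hj B z ↔ Lo r j = B ∧ r.symm ⟨j, hj⟩ = z := by
  simp [Tset]

private lemma swap_lemma (P : Finset α → α → ℝ) {j : ℕ} (hj : j < Fintype.card α)
    {B : Finset α} {a b : α} (ha : a ∈ B) (hb : b ∈ B) :
    ∑ r ∈ Tset j hj B a, pastP P j r = ∑ r ∈ Tset j hj B b, pastP P j r := by
  have step : ∀ (a b : α), a ∈ B → b ∈ B → ∀ r, r ∈ Tset j hj B a →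
      ((Equiv.swap a b).trans r ∈ Tset j hj B b ∧
       pastP P j ((Equiv.swap a b).trans r) = pastP P j r) := by
    intro a b ha hb r hr
    rw [mem_Tset] at hr
    have hagree : ∀ i : Fin (Fintype.card α), (i : ℕ) < j →
        ((Equiv.swap a b).trans r).symm i = r.symm i := by
      intro i hi
      rw [Equiv.symm_trans_apply, Equiv.symm_swap]
      have hnot : r.symm i ∉ B := by
        rw [← hr.1, mem_Lo, Equiv.apply_symm_apply]
        omega
      exact Equiv.swap_apply_of_ne_of_ne (fun h => hnot (h ▸ ha)) (fun h => hnot (h ▸ hb))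
    refine ⟨?_, pastP_congr P hagree⟩
    rw [mem_Tset]
    constructor
    · rw [Lo_det hagree (le_refl j), hr.1]
    · rw [Equiv.symm_trans_apply, Equiv.symm_swap, hr.2, Equiv.swap_apply_left]
  apply Finset.sum_nbij' (i := fun r => (Equiv.swap a b).trans r)
    (j := fun r => (Equiv.swap a b).trans r)
  · intro r hr; exact (step a b ha hb r hr).1
  · intro r hr
    have := (step b a hb ha r hr).1
    rwa [Equiv.swap_comm] at this
  · intro r _
    apply Equiv.ext; intro x
    simp [Equiv.trans_apply, Equiv.swap_apply_self]
  · intro r _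
    apply Equiv.ext; intro x
    simp [Equiv.trans_apply, Equiv.swap_apply_self]
  · intro r hr; exact ((step a b ha hb r hr).2).symm

private def UpS (r : Pref α) (y : α) : Finset α := Lo r ((r y : ℕ))

private lemma markov (g : α → Finset α → ℝ) (c : ℝ) (hc : 0 < c)
    (hg0 : ∀ B : Finset α, B.Nonempty → ∀ y ∈ B, 0 ≤ g y B)
    (hcons : ∀ B : Finset α, B.Nonempty → B ≠ univ →
      ∑ y ∈ B, g y B = ∑ z ∈ Bᶜ, g z (insert z B))
    (htop : ∑ y, g y univ = c) :
    ∃ μ : Pref α → ℝ, (∀ r, 0 ≤ μ r) ∧ (∑ r, μ r = 1) ∧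
      ∀ B : Finset α, B.Nonempty → ∀ y ∈ B,
        ∑ r ∈ univ.filter (fun r : Pref α => UpS r y = B), μ r = g y B / c := by
  classical
  have hne : (univ : Finset α).Nonempty := by
    by_contra h
    rw [Finset.not_nonempty_iff_eq_empty] at h
    rw [h, Finset.sum_empty] at htop
    exact absurd htop.symm (ne_of_gt hc)
  have hn : 0 < Fintype.card α := Fintype.card_pos_iff.2 (Finset.univ_nonempty_iff.1 hne)
  set n := Fintype.card α with hdefn
  set K : Finset α → ℝ := fun B => ∑ y ∈ B, g y B with hK
  have hK0 : ∀ B : Finset α, B.Nonempty → 0 ≤ K B := by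
    intro B hB
    exact Finset.sum_nonneg (fun y hy => hg0 B hB y hy)
  set P : Finset α → α → ℝ := fun B y =>
    if 0 < K B then g y B / K B else ((B.card : ℝ))⁻¹ with hP
  have hP0 : ∀ (B : Finset α), B.Nonempty → ∀ y ∈ B, 0 ≤ P B y := by
    intro B hB y hy
    show 0 ≤ if 0 < K B then g y B / K B else ((B.card : ℝ))⁻¹
    by_cases h : 0 < K B
    · rw [if_pos h]; exact div_nonneg (hg0 B hB y hy) (le_of_lt h)
    · rw [if_neg h]; positivity
  have hP1 : ∀ B : Finset α, B.Nonempty → ∑ y ∈ B, P B y = 1 := by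
    intro B hB
    show ∑ y ∈ B, (if 0 < K B then g y B / K B else ((B.card : ℝ))⁻¹) = 1
    by_cases h : 0 < K B
    · simp only [if_pos h]
      rw [← Finset.sum_div]
      exact div_self (ne_of_gt h)
    · simp only [if_neg h]
      rw [Finset.sum_const, nsmul_eq_mul]
      rw [mul_inv_cancel₀]
      rw [Nat.cast_ne_zero]
      exact Finset.card_ne_zero_of_mem hB.choose_spec
  have hKP : ∀ B : Finset α, B.Nonempty → ∀ y ∈ B, K B * P B y = g y B := by
    intro B hB y hy
    show K B * (if 0 < K B then g y B / K B else ((B.card : ℝ))⁻¹) = g y B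
    by_cases h : 0 < K B
    · rw [if_pos h, mul_comm, div_mul_cancel₀ _ (ne_of_gt h)]
    · rw [if_neg h]
      have hKz : K B = 0 := le_antisymm (not_lt.1 h) (hK0 B hB)
      rw [hKz, zero_mul]
      have := (Finset.sum_eq_zero_iff_of_nonneg (fun y hy => hg0 B hB y hy)).1 hKz
      exact (this y hy).symm
  have hmu0 : ∀ r : Pref α, 0 ≤ muP P r := by
    intro r
    apply Finset.prod_nonneg
    intro i _
    apply hP0
    · rw [← Finset.card_pos, card_Lo]
      omega
    · exact symm_mem_Lo r i
  have hAgr0 : ∀ r₀ : Pref α, Agr 0 r₀ = univ := by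
    intro r₀
    apply Finset.eq_univ_of_forall
    intro r
    rw [mem_Agr]
    intro i hi
    omega
  have hsum1 : ∑ r : Pref α, muP P r = 1 := by
    have r₀ : Pref α := Fintype.equivFin α
    have := muSum P hP1 0 (by omega) r₀
    rw [hAgr0 r₀] at this
    rw [this, pastP]
    rw [Finset.filter_false_of_mem (fun i _ => by omega), Finset.prod_empty]
  have vistop : ∀ (j : ℕ) (hj : j < n) (B : Finset α), B.card = n - j →
      (∑ r ∈ univ.filter (fun r : Pref α => Lo r j = B), muP P r = K B / c) →
      ∀ z ∈ B, ∑ r ∈ Tset j hj B z, muP P r = g z B / c := by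
    intro j hj B hcard hvis z hz
    have hBne : B.Nonempty := ⟨z, hz⟩
    set d : ℕ := n - (j + 1) with hd
    have hd1 : B.card = d + 1 := by omega
    have hclT : ∀ r₀ ∈ Tset j hj B z, Agr (j + 1) r₀ ⊆ Tset j hj B z := by
      intro r₀ hr₀ r hr
      rw [mem_Tset] at hr₀ ⊢
      rw [mem_Agr] at hr
      constructor
      · rw [Lo_det (k := j) hr (by omega), hr₀.1]
      · rw [hr ⟨j, hj⟩ (Nat.lt_succ_self j), hr₀.2]
    have hclS : ∀ r₀ ∈ univ.filter (fun r : Pref α => Lo r j = B),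
        Agr j r₀ ⊆ univ.filter (fun r : Pref α => Lo r j = B) := by
      intro r₀ hr₀ r hr
      rw [mem_filter] at hr₀ ⊢
      rw [mem_Agr] at hr
      exact ⟨mem_univ r, by rw [Lo_det (k := j) hr (le_refl j), hr₀.2]⟩
    have F1 := fiber_lemma P hP1 (j + 1) d (by omega) (Tset j hj B z) hclT
    have hpast : ∀ r ∈ Tset j hj B z, pastP P (j + 1) r = pastP P j r * P B z := by
      intro r hr
      rw [mem_Tset] at hr
      have hfilter : (univ.filter (fun i : Fin n => (i : ℕ) < j + 1))
          = insert ⟨j, hj⟩ (univ.filter (fun i : Fin n => (i : ℕ) < j)) := by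
        ext i
        simp only [mem_filter, mem_univ, true_and, Finset.mem_insert]
        constructor
        · intro h
          rcases Nat.lt_or_ge (i : ℕ) j with h' | h'
          · right; exact h'
          · left; exact Fin.ext (show (i : ℕ) = j by omega)
        · rintro (rfl | h)
          · exact Nat.lt_succ_self j
          · omega
      rw [pastP, hfilter, Finset.prod_insert (by simp), hr.1, hr.2, mul_comm]
      rfl
    have F1' : (∑ r ∈ Tset j hj B z, muP P r) * (Nat.factorial d : ℝ)
        = P B z * ∑ r ∈ Tset j hj B z, pastP P j r := by
      rw [Finset.sum_mul, F1, Finset.sum_congr rfl hpast, ← Finset.sum_mul, mul_comm]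
    have F2 := fiber_lemma P hP1 j (d + 1) (by omega) _ hclS
    have F2' : (K B / c) * (Nat.factorial (d + 1) : ℝ)
        = ∑ r ∈ univ.filter (fun r : Pref α => Lo r j = B), pastP P j r := by
      rw [← hvis, Finset.sum_mul]
      exact F2
    have hmapsS : ∀ r ∈ univ.filter (fun r : Pref α => Lo r j = B), r.symm ⟨j, hj⟩ ∈ B := by
      intro r hr
      rw [mem_filter] at hr
      rw [← hr.2]
      exact symm_mem_Lo r ⟨j, hj⟩
    have hpart : ∑ r ∈ univ.filter (fun r : Pref α => Lo r j = B), pastP P j r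
        = ∑ z' ∈ B, ∑ r ∈ Tset j hj B z', pastP P j r := by
      rw [← Finset.sum_fiberwise_of_maps_to hmapsS (fun r => pastP P j r)]
      apply Finset.sum_congr rfl
      intro z' _
      congr 1
      ext r
      simp only [Finset.mem_filter, mem_Tset, Finset.mem_univ, true_and]
    have hswap : ∀ z' ∈ B, ∑ r ∈ Tset j hj B z', pastP P j r
        = ∑ r ∈ Tset j hj B z, pastP P j r := by
      intro z' hz'
      exact swap_lemma P hj hz' hz
    have hpart' : ∑ r ∈ univ.filter (fun r : Pref α => Lo r j = B), pastP P j r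
        = ((d : ℝ) + 1) * ∑ r ∈ Tset j hj B z, pastP P j r := by
      rw [hpart, Finset.sum_congr rfl hswap, Finset.sum_const, nsmul_eq_mul, hd1]
      push_cast
      ring
    have hfac : (Nat.factorial d : ℝ) ≠ 0 := by
      exact_mod_cast Nat.factorial_ne_zero d
    have hd1ne : ((d : ℝ) + 1) ≠ 0 := by positivity
    have key : (∑ r ∈ Tset j hj B z, muP P r) * (Nat.factorial d : ℝ) * ((d : ℝ) + 1)
        = (g z B / c) * (Nat.factorial d : ℝ) * ((d : ℝ) + 1) := by
      calc (∑ r ∈ Tset j hj B z, muP P r) * (Nat.factorial d : ℝ) * ((d : ℝ) + 1)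
          = P B z * (((d : ℝ) + 1) * ∑ r ∈ Tset j hj B z, pastP P j r) := by
            rw [F1']; ring
        _ = P B z * ((K B / c) * (Nat.factorial (d + 1) : ℝ)) := by
            rw [← hpart', F2']
        _ = (g z B / c) * (Nat.factorial d : ℝ) * ((d : ℝ) + 1) := by
            rw [Nat.factorial_succ]
            push_cast
            rw [show P B z * (K B / c * (((d : ℝ) + 1) * (Nat.factorial d : ℝ)))
                = (K B * P B z) / c * (Nat.factorial d : ℝ) * ((d : ℝ) + 1) by ring]
            rw [hKP B hBne z hz]
    have h1 := mul_right_cancel₀ hd1ne key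
    exact mul_right_cancel₀ hfac h1
  have vis : ∀ (j : ℕ), j < n → ∀ B : Finset α, B.card = n - j →
      ∑ r ∈ univ.filter (fun r : Pref α => Lo r j = B), muP P r = K B / c := by
    intro j
    induction j with
    | zero =>
      intro _ B hcard
      have hBuniv : B = univ := Finset.eq_univ_of_card B (by rw [hcard]; omega)
      subst hBuniv
      rw [Finset.filter_true_of_mem (fun r _ => Lo_zero r)]
      rw [hsum1, show K univ = c from htop, div_self (ne_of_gt hc)]
    | succ j ih =>
      intro hjn B hcard
      have hj : j < n := by omega
      have hBne : B.Nonempty := by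
        rw [← Finset.card_pos]
        omega
      have hBuniv : B ≠ univ := by
        intro h
        rw [h, Finset.card_univ] at hcard
        omega
      have hmaps : ∀ r ∈ univ.filter (fun r : Pref α => Lo r (j + 1) = B),
          r.symm ⟨j, hj⟩ ∈ Bᶜ := by
        intro r hr
        rw [mem_filter] at hr
        rw [Finset.mem_compl, ← hr.2, Lo_succ r j hj]
        exact Finset.notMem_erase _ _
      rw [← Finset.sum_fiberwise_of_maps_to hmaps (fun r => muP P r)]
      have hfib : ∀ z ∈ Bᶜ,
          (univ.filter (fun r : Pref α => Lo r (j + 1) = B)).filter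
            (fun r => r.symm ⟨j, hj⟩ = z) = Tset j hj (insert z B) z := by
        intro z hzc
        rw [Finset.mem_compl] at hzc
        ext r
        simp only [Finset.mem_filter, mem_Tset, Finset.mem_univ, true_and]
        constructor
        · rintro ⟨hLo, hsy⟩
          refine ⟨?_, hsy⟩
          rw [← hsy, ← hLo, Lo_succ r j hj, Finset.insert_erase (symm_mem_Lo r ⟨j, hj⟩)]
        · rintro ⟨hLo, hsy⟩
          refine ⟨?_, hsy⟩
          rw [Lo_succ r j hj, hsy, hLo, Finset.erase_insert hzc]
      have hterm : ∀ z ∈ Bᶜ,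
          ∑ r ∈ (univ.filter (fun r : Pref α => Lo r (j + 1) = B)).filter
            (fun r => r.symm ⟨j, hj⟩ = z), muP P r = g z (insert z B) / c := by
        intro z hzc
        rw [hfib z hzc]
        rw [Finset.mem_compl] at hzc
        have hcard' : (insert z B).card = n - j := by
          rw [Finset.card_insert_of_notMem hzc]
          omega
        apply vistop j hj (insert z B) hcard' (ih hj (insert z B) hcard')
        exact Finset.mem_insert_self z B
      rw [Finset.sum_congr rfl hterm, ← Finset.sum_div]
      rw [← hcons B hBne hBuniv]
  refine ⟨muP P, hmu0, hsum1, ?_⟩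
  intro B hB y hy
  have hcle : B.card ≤ n := Finset.card_le_univ B
  have hcpos : 0 < B.card := Finset.card_pos.2 hB
  have hjn : n - B.card < n := by omega
  have hfil : univ.filter (fun r : Pref α => UpS r y = B) = Tset (n - B.card) hjn B y := by
    ext r
    simp only [mem_filter, mem_univ, true_and, mem_Tset]
    constructor
    · intro h
      have hcardU : (UpS r y).card = n - (r y : ℕ) := card_Lo r (r y : ℕ)
      rw [h] at hcardU
      have hlt : (r y : ℕ) < n := (r y).isLt
      have hval : (r y : ℕ) = n - B.card := by omega
      constructor
      · rw [← hval]; exact h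
      · have heq : (⟨n - B.card, hjn⟩ : Fin n) = r y := Fin.ext (by simp [hval])
        rw [heq, Equiv.symm_apply_apply]
    · rintro ⟨hLo, hsy⟩
      have heq : r y = ⟨n - B.card, hjn⟩ := by rw [← hsy, Equiv.apply_symm_apply]
      rw [UpS, heq]
      exact hLo
  rw [hfil]
  exact vistop (n - B.card) hjn B (by omega) (vis _ hjn B (by omega)) y hy


private lemma mem_UpS_self (r : Pref α) (x : α) : x ∈ UpS r x := by
  rw [UpS, mem_Lo]

private lemma mem_NSet_iff {x : α} {A : Finset α} (hx : x ∈ A) (r : Pref α) :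
    r ∈ NSet x A ↔ A ⊆ UpS r x := by
  rw [NSet, mem_filter]
  simp only [mem_univ, true_and]
  constructor
  · intro h z hz
    rw [UpS, mem_Lo]
    rcases eq_or_ne z x with rfl | hne
    · exact le_refl _
    · have := h z hz hne
      rw [Fin.lt_def] at this
      omega
  · intro h z hz hne
    have h1 : (r x : ℕ) ≤ (r z : ℕ) := mem_Lo.1 (h hz)
    have h2 : (r x : ℕ) ≠ (r z : ℕ) := by
      intro he
      exact hne (r.injective (Fin.ext he)).symm
    rw [Fin.lt_def]
    omega

private lemma group_NSet {x : α} {A : Finset α} (hx : x ∈ A) (F : Pref α → ℝ) :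
    ∑ r ∈ NSet x A, F r
      = ∑ A' ∈ SS A, ∑ r ∈ univ.filter (fun r : Pref α => UpS r x = A'), F r := by
  rw [← Finset.sum_fiberwise_of_maps_to (g := fun r : Pref α => UpS r x) (t := SS A)
    (fun r hr => mem_SS.2 ((mem_NSet_iff hx r).1 hr)) F]
  apply Finset.sum_congr rfl
  intro A' hA'
  congr 1
  ext r
  simp only [mem_filter, mem_univ, true_and]
  constructor
  · rintro ⟨_, h⟩; exact h
  · intro h
    refine ⟨(mem_NSet_iff hx r).2 ?_, h⟩
    rw [h]
    exact mem_SS.1 hA'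

/-- A two-period random joint choice rule satisfying complete
monotonicity and marginality has a consumption dependent random utility
representation. -/
theorem compMono_marginality_implies_cdrum
    (p q : α → α → Finset α → Finset α → ℝ)
    (hp0 : ∀ x y A B, 0 ≤ p x y A B)
    (hpz : ∀ x y (A B : Finset α), x ∉ A ∨ y ∉ B → p x y A B = 0)
    (hp1 : ∀ A B : Finset α, A.Nonempty → B.Nonempty →
      ∑ x ∈ A, ∑ y ∈ B, p x y A B = 1)
    (hq : ∀ x y (A B : Finset α), A.Nonempty → B.Nonempty →
      p x y A B = ∑ A' ∈ Finset.univ.powerset.filter (fun A' => A ⊆ A'),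
        ∑ B' ∈ Finset.univ.powerset.filter (fun B' => B ⊆ B'), q x y A' B')
    (hcm : ∀ (A B : Finset α), A.Nonempty → B.Nonempty → ∀ x ∈ A, ∀ y ∈ B,
      0 ≤ q x y A B)
    (hmarg : ∀ (A B C : Finset α), A.Nonempty → B.Nonempty → C.Nonempty → ∀ x ∈ A,
      ∑ y ∈ B, p x y A B = ∑ y ∈ C, p x y A C) :
    ∃ (ν : Pref α → ℝ) (t : α → Pref α → Pref α → ℝ),
      (∀ r, 0 ≤ ν r) ∧ (∑ r, ν r = 1) ∧
      (∀ x r r', 0 ≤ t x r r') ∧ (∀ x r, ∑ r', t x r r' = 1) ∧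
      ∀ (A B : Finset α), A.Nonempty → B.Nonempty → ∀ x ∈ A, ∀ y ∈ B,
        p x y A B = ∑ r ∈ NSet x A, ∑ r' ∈ NSet y B, ν r * t x r r' := by
  classical
  rcases isEmpty_or_nonempty α with hα | hα
  · refine ⟨fun _ => 1, fun _ _ _ => 1, fun _ => zero_le_one, ?_,
      fun _ _ _ => zero_le_one, fun x _ => (hα.false x).elim, fun A B hA _ x hx _ _ => ?_⟩
    · rw [Finset.sum_const, nsmul_eq_mul, mul_one, Finset.card_univ, Nat.cast_eq_one,
        Fintype.card_equiv (Fintype.equivFin α)]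
      simp [Fintype.card_eq_zero]
    · exact (hα.false x).elim
  have hU : (univ : Finset α).Nonempty := Finset.univ_nonempty
  have hq' : ∀ x y (A B : Finset α), A.Nonempty → B.Nonempty →
      p x y A B = ∑ A' ∈ SS A, ∑ B' ∈ SS B, q x y A' B' := hq
  set g1 : α → Finset α → ℝ := fun x A => ∑ y, q x y A univ with hg1def
  have hpA : ∀ x (A : Finset α), A.Nonempty →
      ∑ A' ∈ SS A, g1 x A' = ∑ y, p x y A univ := by
    intro x A hA
    calc ∑ A' ∈ SS A, g1 x A' = ∑ y, ∑ A' ∈ SS A, q x y A' univ := Finset.sum_comm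
      _ = ∑ y, p x y A univ := by
          apply Finset.sum_congr rfl
          intro y _
          rw [hq' x y A univ hA hU]
          apply Finset.sum_congr rfl
          intro A' _
          rw [SS_univ, sum_singleton]
  have hC5 : ∀ x (B : Finset α), B.Nonempty → ∀ A₀ : Finset α, A₀.Nonempty →
      ∑ y ∈ B, ∑ B' ∈ SS B, q x y A₀ B' = g1 x A₀ := by
    intro x B hB
    apply mob (F := fun A₀ => ∑ y ∈ B, ∑ B' ∈ SS B, q x y A₀ B') (G := fun A₀ => g1 x A₀)
    intro A hA
    have hL : ∑ A' ∈ SS A, ∑ y ∈ B, ∑ B' ∈ SS B, q x y A' B' = ∑ y ∈ B, p x y A B := by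
      rw [Finset.sum_comm]
      apply Finset.sum_congr rfl
      intro y _
      rw [hq' x y A B hA hB]
    rw [hL, hpA x A hA]
    by_cases hx : x ∈ A
    · exact hmarg A B univ hA hB hU x hx
    · rw [Finset.sum_eq_zero (fun y _ => hpz x y A B (Or.inl hx)),
          Finset.sum_eq_zero (fun y _ => hpz x y A univ (Or.inl hx))]
  have h1 : ∀ A : Finset α, A.Nonempty → ∑ x ∈ A, ∑ A' ∈ SS A, g1 x A' = 1 := by
    intro A hA
    rw [Finset.sum_congr rfl (fun x _ => hpA x A hA)]
    exact hp1 A univ hA hU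
  obtain ⟨htop1, hcons1⟩ := cons g1 1 hU h1
  have hg10 : ∀ A : Finset α, A.Nonempty → ∀ x ∈ A, 0 ≤ g1 x A := fun A hA x hx =>
    Finset.sum_nonneg (fun y _ => hcm A univ hA hU x hx y (mem_univ y))
  obtain ⟨ν, hν0, hν1, hνm⟩ := markov g1 1 one_pos hg10 hcons1 htop1
  have hT : ∀ (x : α) (A₀ : Finset α), x ∈ A₀ → 0 < g1 x A₀ →
      ∃ μ : Pref α → ℝ, (∀ r, 0 ≤ μ r) ∧ (∑ r, μ r = 1) ∧
        ∀ B : Finset α, B.Nonempty → ∀ y ∈ B,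
          ∑ r ∈ univ.filter (fun r : Pref α => UpS r y = B), μ r
            = q x y A₀ B / g1 x A₀ := by
    intro x A₀ hx hpos
    have hA₀ : A₀.Nonempty := ⟨x, hx⟩
    obtain ⟨hctop, hccons⟩ := cons (fun y B => q x y A₀ B) (g1 x A₀) hU
      (fun B hB => hC5 x B hB A₀ hA₀)
    exact markov _ _ hpos (fun B hB y hy => hcm A₀ B hA₀ hB x hx y hy) hccons hctop
  set tfun : α → Finset α → Pref α → ℝ := fun x A₀ =>
    if h : x ∈ A₀ ∧ 0 < g1 x A₀ then (hT x A₀ h.1 h.2).choose else ν with htfun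
  refine ⟨ν, fun x r => tfun x (UpS r x), hν0, hν1, ?_, ?_, ?_⟩
  · intro x r r'
    rw [htfun]
    dsimp only
    split
    · next h => exact (hT x (UpS r x) h.1 h.2).choose_spec.1 r'
    · exact hν0 r'
  · intro x r
    rw [htfun]
    dsimp only
    split
    · next h => exact (hT x (UpS r x) h.1 h.2).choose_spec.2.1
    · exact hν1
  intro A B hA hB x hx y hy
  rw [hq' x y A B hA hB, group_NSet hx (fun r => ∑ r' ∈ NSet y B, ν r * tfun x (UpS r x) r')]
  apply Finset.sum_congr rfl
  intro A' hA'
  have hxA' : x ∈ A' := mem_SS.1 hA' hx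
  have hA'ne : A'.Nonempty := ⟨x, hxA'⟩
  have hνmarg : ∑ r ∈ univ.filter (fun r : Pref α => UpS r x = A'), ν r = g1 x A' := by
    rw [hνm A' hA'ne x hxA', div_one]
  by_cases hpos : 0 < g1 x A'
  · have hmu := (hT x A' hxA' hpos).choose_spec
    have hts : ∀ r ∈ univ.filter (fun r : Pref α => UpS r x = A'), ∀ r' : Pref α,
        tfun x (UpS r x) r' = (hT x A' hxA' hpos).choose r' := by
      intro r hr r'
      rw [mem_filter] at hr
      rw [hr.2, htfun]
      dsimp only
      rw [dif_pos ⟨hxA', hpos⟩]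
    have hS : ∑ r' ∈ NSet y B, (hT x A' hxA' hpos).choose r'
        = (∑ B' ∈ SS B, q x y A' B') / g1 x A' := by
      rw [group_NSet hy ((hT x A' hxA' hpos).choose), Finset.sum_div]
      apply Finset.sum_congr rfl
      intro B' hB'
      exact hmu.2.2 B' (hB.mono (mem_SS.1 hB')) y (mem_SS.1 hB' hy)
    symm
    calc ∑ r ∈ univ.filter (fun r : Pref α => UpS r x = A'),
          ∑ r' ∈ NSet y B, ν r * tfun x (UpS r x) r'
        = ∑ r ∈ univ.filter (fun r : Pref α => UpS r x = A'),
          ν r * ((∑ B' ∈ SS B, q x y A' B') / g1 x A') := by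
          apply Finset.sum_congr rfl
          intro r hr
          rw [← Finset.mul_sum]
          congr 1
          rw [Finset.sum_congr rfl (fun r' _ => hts r hr r'), hS]
      _ = (∑ B' ∈ SS B, q x y A' B') := by
          rw [← Finset.sum_mul, hνmarg, mul_comm,
            div_mul_cancel₀ _ (ne_of_gt hpos)]
  · have hg0 : g1 x A' = 0 := le_antisymm (not_lt.1 hpos) (hg10 A' hA'ne x hxA')
    have hW : ∑ B' ∈ SS B, q x y A' B' = 0 := by
      have hsum := hC5 x B hB A' hA'ne
      rw [hg0] at hsum
      have hnn : ∀ y' ∈ B, 0 ≤ ∑ B' ∈ SS B, q x y' A' B' := fun y' hy' =>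
        Finset.sum_nonneg (fun B' hB' =>
          hcm A' B' hA'ne (hB.mono (mem_SS.1 hB')) x hxA' y' (mem_SS.1 hB' hy'))
      exact (Finset.sum_eq_zero_iff_of_nonneg hnn).1 hsum y hy
    rw [hW]
    symm
    calc ∑ r ∈ univ.filter (fun r : Pref α => UpS r x = A'),
          ∑ r' ∈ NSet y B, ν r * tfun x (UpS r x) r'
        = ∑ r ∈ univ.filter (fun r : Pref α => UpS r x = A'),
          ν r * ∑ r' ∈ NSet y B, tfun x (UpS r x) r' := by
          apply Finset.sum_congr rfl
          intro r hr
          rw [← Finset.mul_sum]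
      _ = 0 := by
          apply Finset.sum_eq_zero
          intro r hr
          have hν0' : ν r = 0 := by
            have hle : ν r ≤ ∑ r'' ∈ univ.filter (fun r : Pref α => UpS r x = A'), ν r'' :=
              Finset.single_le_sum (fun r'' _ => hν0 r'') hr
            rw [hνmarg, hg0] at hle
            have := hν0 r
            linarith
          rw [hν0', zero_mul]
end

section
/- Let p be a random choice rule on a finite set X that admits a random utility representation p(x,A) = ∑_{≻∈N(x,A)} ν(≻). Then its Möbius inverse q satisfies the flow-conservation identity: for every A with ∅ ⊊ A ⊊ X, ∑_{x∈A} q(x,A) = ∑_{z∉A} q(z, A∪{z}). -/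
open Finset

variable {α : Type*} [Fintype α] [DecidableEq α]

def ISet (x : α) (A : Finset α) : Finset (Pref α) :=
  Finset.univ.filter (fun r => (∀ y ∈ A, y ≠ x → r x < r y) ∧ (∀ z, z ∉ A → r z < r x))

lemma interval_sum (A C : Finset α) (hAC : A ⊆ C) :
    ∑ B ∈ (Finset.univ.powerset.filter (fun B => A ⊆ B)).filter (fun B => B ⊆ C),
      (-1:ℝ)^((B \ A).card) = if C = A then 1 else 0 := by
  have key : ∑ B ∈ (Finset.univ.powerset.filter (fun B => A ⊆ B)).filter (fun B => B ⊆ C),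
      (-1:ℝ)^((B \ A).card) = ∑ D ∈ (C \ A).powerset, (-1:ℝ)^(D.card) := by
    refine Finset.sum_bij' (fun B _ => B \ A) (fun D _ => A ∪ D) ?_ ?_ ?_ ?_ ?_
    · intro B hB
      simp only [mem_filter, mem_powerset] at hB ⊢
      exact sdiff_subset_sdiff hB.2 subset_rfl
    · intro D hD
      simp only [mem_powerset] at hD
      simp only [mem_filter, mem_powerset]
      refine ⟨⟨subset_univ _, subset_union_left⟩, union_subset hAC (hD.trans sdiff_subset)⟩
    · intro B hB
      simp only [mem_filter, mem_powerset] at hB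
      exact union_sdiff_of_subset hB.1.2
    · intro D hD
      simp only [mem_powerset] at hD
      have hdisj : Disjoint A D := disjoint_sdiff.mono_right hD
      show (A ∪ D) \ A = D
      rw [union_sdiff_cancel_left hdisj]
    · intro B hB; rfl
  rw [key]
  have := Finset.sum_powerset_neg_one_pow_card (x := C \ A)
  have hcast : ∑ D ∈ (C \ A).powerset, (-1:ℝ)^(D.card)
      = ((∑ D ∈ (C \ A).powerset, (-1:ℤ)^(D.card) : ℤ) : ℝ) := by push_cast; rfl
  rw [hcast, this]
  by_cases h : C \ A = ∅
  · rw [if_pos h, if_pos (le_antisymm (sdiff_eq_empty_iff_subset.mp h) hAC)]; norm_num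
  · rw [if_neg h, if_neg (fun hCA => h (by rw [hCA, sdiff_self]; rfl))]; norm_num

lemma q_moebius (p q : α → Finset α → ℝ)
    (hq : ∀ x (A : Finset α), A.Nonempty →
      p x A = ∑ A' ∈ Finset.univ.powerset.filter (fun A' => A ⊆ A'), q x A')
    (x : α) (A : Finset α) (hA : A.Nonempty) :
    q x A = ∑ B ∈ Finset.univ.powerset.filter (fun B => A ⊆ B),
      (-1:ℝ)^((B \ A).card) * p x B := by
  have step1 : ∀ B ∈ Finset.univ.powerset.filter (fun B => A ⊆ B),
      (-1:ℝ)^((B \ A).card) * p x B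
        = ∑ C ∈ Finset.univ.powerset.filter (fun C => B ⊆ C),
            (-1:ℝ)^((B \ A).card) * q x C := by
    intro B hB
    simp only [mem_filter, mem_powerset] at hB
    rw [hq x B (hA.mono hB.2), Finset.mul_sum]
  rw [Finset.sum_congr rfl step1]
  rw [Finset.sum_comm' (s' := fun C => (Finset.univ.powerset.filter (fun B => A ⊆ B)).filter
        (fun B => B ⊆ C)) (t' := Finset.univ.powerset.filter (fun C => A ⊆ C))
        (by
          intro B C
          simp only [mem_filter, mem_powerset]
          constructor
          · rintro ⟨⟨-, hAB⟩, -, hBC⟩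
            exact ⟨⟨⟨subset_univ _, hAB⟩, hBC⟩, subset_univ _, hAB.trans hBC⟩
          · rintro ⟨⟨⟨-, hAB⟩, hBC⟩, -, -⟩
            exact ⟨⟨subset_univ _, hAB⟩, subset_univ _, hBC⟩)]
  have step2 : ∀ C ∈ Finset.univ.powerset.filter (fun C => A ⊆ C),
      ∑ B ∈ (Finset.univ.powerset.filter (fun B => A ⊆ B)).filter (fun B => B ⊆ C),
          (-1:ℝ)^((B \ A).card) * q x C = (if C = A then 1 else 0) * q x C := by
    intro C hC
    simp only [mem_filter, mem_powerset] at hC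
    rw [← Finset.sum_mul, interval_sum A C hC.2]
  rw [Finset.sum_congr rfl step2]
  simp only [ite_mul, one_mul, zero_mul]
  rw [Finset.sum_ite_eq' _ A (q x)]
  rw [if_pos (by simp only [mem_filter, mem_powerset]; exact ⟨subset_univ _, subset_rfl⟩)]

lemma q_rep (p q : α → Finset α → ℝ)
    (hq : ∀ x (A : Finset α), A.Nonempty →
      p x A = ∑ A' ∈ Finset.univ.powerset.filter (fun A' => A ⊆ A'), q x A')
    (ν : Pref α → ℝ)
    (hrep : ∀ x (A : Finset α), A.Nonempty → x ∈ A → p x A = ∑ r ∈ NSet x A, ν r)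
    (x : α) (A : Finset α) (hA : A.Nonempty) (hx : x ∈ A) :
    q x A = ∑ r ∈ ISet x A, ν r := by
  rw [q_moebius p q hq x A hA]
  have step1 : ∀ B ∈ Finset.univ.powerset.filter (fun B => A ⊆ B),
      (-1:ℝ)^((B \ A).card) * p x B
      = ∑ r : Pref α, (-1:ℝ)^((B \ A).card) *
          (if (∀ y ∈ B, y ≠ x → r x < r y) then ν r else 0) := by
    intro B hB
    simp only [mem_filter, mem_powerset] at hB
    rw [hrep x B (hA.mono hB.2) (hB.2 hx), NSet, Finset.sum_filter, Finset.mul_sum]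
  rw [Finset.sum_congr rfl step1, Finset.sum_comm]
  have step2 : ∀ r : Pref α,
      ∑ B ∈ Finset.univ.powerset.filter (fun B => A ⊆ B),
        (-1:ℝ)^((B \ A).card) * (if (∀ y ∈ B, y ≠ x → r x < r y) then ν r else 0)
      = if r ∈ ISet x A then ν r else 0 := by
    intro r
    set V : Finset α := insert x (Finset.univ.filter (fun y => r x < r y)) with hV
    have hcond : ∀ B : Finset α, (∀ y ∈ B, y ≠ x → r x < r y) ↔ B ⊆ V := by
      intro B
      constructor
      · intro h y hy
        by_cases hyx : y = x
        · exact hyx ▸ mem_insert_self x _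
        · exact mem_insert_of_mem (mem_filter.mpr ⟨mem_univ _, h y hy hyx⟩)
      · intro h y hy hyx
        rcases mem_insert.mp (h hy) with h1 | h1
        · exact absurd h1 hyx
        · exact (mem_filter.mp h1).2
    have step2a : ∑ B ∈ Finset.univ.powerset.filter (fun B => A ⊆ B),
        (-1:ℝ)^((B \ A).card) * (if (∀ y ∈ B, y ≠ x → r x < r y) then ν r else 0)
        = (∑ B ∈ (Finset.univ.powerset.filter (fun B => A ⊆ B)).filter (fun B => B ⊆ V),
            (-1:ℝ)^((B \ A).card)) * ν r := by
      have e1 : ∀ B, (-1:ℝ)^((B \ A).card) * (if (∀ y ∈ B, y ≠ x → r x < r y) then ν r else 0)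
          = if B ⊆ V then (-1:ℝ)^((B \ A).card) * ν r else 0 := by
        intro B
        rw [mul_ite, mul_zero]
        exact if_congr (hcond B) rfl rfl
      rw [Finset.sum_congr rfl (fun B _ => e1 B), ← Finset.sum_filter, Finset.sum_mul]
    rw [step2a]
    have hVA : (r ∈ ISet x A) ↔ V = A := by
      simp only [ISet, mem_filter, mem_univ, true_and]
      constructor
      · rintro ⟨h1, h2⟩
        ext w
        simp only [hV, mem_insert, mem_filter, mem_univ, true_and]
        constructor
        · rintro (rfl | hw)
          · exact hx
          · by_contra hwA
            exact absurd hw (asymm (h2 w hwA))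
        · intro hwA
          by_cases hwx : w = x
          · exact Or.inl hwx
          · exact Or.inr (h1 w hwA hwx)
      · intro hVAeq
        constructor
        · intro y hy hyx
          have : y ∈ V := hVAeq ▸ hy
          rcases mem_insert.mp this with h1 | h1
          · exact absurd h1 hyx
          · exact (mem_filter.mp h1).2
        · intro z hz
          have hzV : z ∉ V := fun hc => hz (hVAeq ▸ hc)
          have hzx : z ≠ x := fun h => hz (h ▸ hx)
          have h1 : ¬ r x < r z :=
            fun h => hzV (mem_insert_of_mem (mem_filter.mpr ⟨mem_univ _, h⟩))
          exact lt_of_le_of_ne (not_lt.mp h1) (fun h => hzx (r.injective h))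
    by_cases hAV : A ⊆ V
    · rw [interval_sum A V hAV]
      by_cases h : V = A
      · rw [if_pos h, if_pos (hVA.mpr h), one_mul]
      · rw [if_neg h, if_neg (fun hc => h (hVA.mp hc)), zero_mul]
    · have hempty : (Finset.univ.powerset.filter (fun B => A ⊆ B)).filter (fun B => B ⊆ V)
          = ∅ := by
        rw [Finset.filter_eq_empty_iff]
        intro B hB
        simp only [mem_filter, mem_powerset] at hB
        exact fun hc => hAV (hB.2.trans hc)
      rw [hempty, Finset.sum_empty, zero_mul,
        if_neg (fun hc => hAV ((hVA.mp hc) ▸ subset_rfl))]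
  rw [Finset.sum_congr rfl (fun r _ => step2 r), ← Finset.sum_filter]
  congr 1
  ext r
  simp

def TSet (A : Finset α) : Finset (Pref α) :=
  Finset.univ.filter (fun r => ∀ z, z ∉ A → ∀ y ∈ A, r z < r y)

lemma biUnion_left (A : Finset α) (hA : A.Nonempty) :
    A.biUnion (fun x => ISet x A) = TSet A := by
  ext r
  simp only [mem_biUnion, TSet, ISet, mem_filter, mem_univ, true_and]
  constructor
  · rintro ⟨x, hx, h1, h2⟩ z hz y hy
    rcases eq_or_ne y x with rfl | hyx
    · exact h2 z hz
    · exact (h2 z hz).trans (h1 y hy hyx)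
  · intro hT
    obtain ⟨x, hxA, hmin⟩ := A.exists_min_image (fun a => r a) hA
    exact ⟨x, hxA,
      fun y hy hyx => lt_of_le_of_ne (hmin y hy) (fun h => hyx (r.injective h.symm)),
      fun z hz => hT z hz x hxA⟩

lemma biUnion_right (A : Finset α) (hAne : A ≠ Finset.univ) :
    (Finset.univ \ A).biUnion (fun z => ISet z (insert z A)) = TSet A := by
  ext r
  simp only [mem_biUnion, TSet, ISet, mem_filter, mem_univ, true_and, mem_sdiff]
  constructor
  · rintro ⟨z, hzA, h1, h2⟩ w hw y hy
    have hyz : y ≠ z := fun h => hzA (h ▸ hy)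
    have hzy : (r) z < r y := h1 y (mem_insert_of_mem hy) hyz
    rcases eq_or_ne w z with rfl | hwz
    · exact hzy
    · exact (h2 w (by simp [hw, hwz])).trans hzy
  · intro hT
    have hne : (Finset.univ \ A).Nonempty := by
      rw [Finset.sdiff_nonempty]
      exact fun h => hAne (Finset.univ_subset_iff.mp h)
    obtain ⟨z, hzmem, hzmax⟩ := (Finset.univ \ A).exists_max_image (fun a => r a) hne
    have hzA : z ∉ A := (mem_sdiff.mp hzmem).2
    refine ⟨z, hzA, ?_, ?_⟩
    · intro y hy hyz
      rcases mem_insert.mp hy with rfl | hyA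
      · exact absurd rfl hyz
      · exact hT z hzA y hyA
    · intro w hw
      have hwz : w ≠ z := fun h => hw (h ▸ mem_insert_self _ _)
      have hwA : w ∉ A := fun h => hw (mem_insert_of_mem h)
      exact lt_of_le_of_ne (hzmax w (mem_sdiff.mpr ⟨mem_univ _, hwA⟩))
        (fun h => hwz (r.injective h))

/-- For a random choice rule with a random utility representation, the
Möbius inverse satisfies flow conservation: for every menu `A` with `∅ ⊊ A ⊊ X`,
`∑_{x∈A} q(x,A) = ∑_{z∉A} q(z, A∪{z})`. -/
theorem rum_flow_conservation
    (p q : α → Finset α → ℝ)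
    (hp0 : ∀ x A, 0 ≤ p x A)
    (hpz : ∀ x (A : Finset α), x ∉ A → p x A = 0)
    (hp1 : ∀ A : Finset α, A.Nonempty → ∑ x ∈ A, p x A = 1)
    (hq : ∀ x (A : Finset α), A.Nonempty →
      p x A = ∑ A' ∈ Finset.univ.powerset.filter (fun A' => A ⊆ A'), q x A')
    (ν : Pref α → ℝ) (hν0 : ∀ r, 0 ≤ ν r) (hν1 : ∑ r, ν r = 1)
    (hrep : ∀ x (A : Finset α), A.Nonempty → x ∈ A → p x A = ∑ r ∈ NSet x A, ν r) :
    ∀ A : Finset α, A.Nonempty → A ≠ Finset.univ →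
      ∑ x ∈ A, q x A = ∑ z ∈ Finset.univ \ A, q z (insert z A) := by
  intro A hA hAne
  have hdisj1 : Set.PairwiseDisjoint (↑A) (fun x => ISet x A) := by
    intro x hx y hy hxy
    refine Finset.disjoint_left.mpr fun r hrx hry => ?_
    simp only [ISet, mem_filter] at hrx hry
    exact lt_asymm (hrx.2.1 y (Finset.mem_coe.mp hy) (Ne.symm hxy))
      (hry.2.1 x (Finset.mem_coe.mp hx) hxy)
  have hdisj2 : Set.PairwiseDisjoint (↑(Finset.univ \ A))
      (fun z => ISet z (insert z A)) := by
    intro x hx y hy hxy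
    have hxA : x ∉ A := (mem_sdiff.mp (Finset.mem_coe.mp hx)).2
    have hyA : y ∉ A := (mem_sdiff.mp (Finset.mem_coe.mp hy)).2
    refine Finset.disjoint_left.mpr fun r hrx hry => ?_
    simp only [ISet, mem_filter] at hrx hry
    have h1 : (r) y < r x := hrx.2.2 y (by simp [hyA, Ne.symm hxy])
    have h2 : (r) x < r y := hry.2.2 x (by simp [hxA, hxy])
    exact lt_asymm h1 h2
  calc ∑ x ∈ A, q x A = ∑ x ∈ A, ∑ r ∈ ISet x A, ν r :=
        Finset.sum_congr rfl fun x hx => q_rep p q hq ν hrep x A hA hx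
    _ = ∑ r ∈ A.biUnion (fun x => ISet x A), ν r := (Finset.sum_biUnion hdisj1).symm
    _ = ∑ r ∈ TSet A, ν r := by rw [biUnion_left A hA]
    _ = ∑ r ∈ (Finset.univ \ A).biUnion (fun z => ISet z (insert z A)), ν r := by
        rw [biUnion_right A hAne]
    _ = ∑ z ∈ Finset.univ \ A, ∑ r ∈ ISet z (insert z A), ν r :=
        Finset.sum_biUnion hdisj2
    _ = ∑ z ∈ Finset.univ \ A, q z (insert z A) :=
        Finset.sum_congr rfl fun z hz => (q_rep p q hq ν hrep z (insert z A)
          (insert_nonempty _ _) (mem_insert_self _ _)).symm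
end
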